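/- Let A be a commutative semi-automaton, S, T strongly connected components, x a letter with δ(S, x) = S, and u a word with δ(S, u) ⊆ T. Then δ(T, x) = T. -/
import Mathlib


/-- The action of a complete deterministic semi-automaton, extended to words. -/
def run {Q A : Type*} (δ : Q → A → Q) (q : Q) (w : List A) : Q := w.foldl δ q

/-- State `t` is reachable from `s`. -/
def Reach {Q A : Type*} (δ : Q → A → Q) (s t : Q) : Prop := ∃ u : List A, run δ s u = t

/-- `S` is a strongly connected component: a maximal set of pairwise connected states. -/
def IsSCC {Q A : Type*} (δ : Q → A → Q) (S : Set Q) : Prop :=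
  S.Nonempty ∧ (∀ s ∈ S, ∀ t ∈ S, Reach δ s t) ∧
    ∀ q : Q, (∀ s ∈ S, Reach δ s q ∧ Reach δ q s) → q ∈ S

lemma run_append {Q A : Type*} (δ : Q → A → Q) (q : Q) (u v : List A) :
    run δ q (u ++ v) = run δ (run δ q u) v := List.foldl_append ..

lemma run_letter {Q A : Type*} (δ : Q → A → Q)
    (hcomm : ∀ (q : Q) (a b : A), δ (δ q a) b = δ (δ q b) a)
    (w : List A) : ∀ (q : Q) (a : A), δ (run δ q w) a = run δ (δ q a) w := by
  induction w with
  | nil => intro q a; rfl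
  | cons b w ih =>
    intro q a
    show δ (run δ (δ q b) w) a = run δ (δ (δ q a) b) w
    rw [ih, hcomm]

lemma run_comm {Q A : Type*} (δ : Q → A → Q)
    (hcomm : ∀ (q : Q) (a b : A), δ (δ q a) b = δ (δ q b) a)
    (v : List A) : ∀ (q : Q) (w : List A),
    run δ (run δ q w) v = run δ (run δ q v) w := by
  induction v with
  | nil => intro q w; rfl
  | cons a v ih =>
    intro q w
    show run δ (δ (run δ q w) a) v = run δ (run δ (δ q a) v) w
    rw [run_letter δ hcomm, ih]

lemma iter_run {Q A : Type*} (δ : Q → A → Q) (x : A) (n : ℕ) :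
    ∀ q : Q, (fun q => δ q x)^[n] q = run δ q (List.replicate n x) := by
  induction n with
  | zero => intro q; rfl
  | succ n ih =>
    intro q
    rw [Function.iterate_succ_apply, List.replicate_succ]
    exact ih (δ q x)

theorem letter_permutes_reachable_component {Q A : Type*} [Fintype Q] (δ : Q → A → Q)
    (hcomm : ∀ (q : Q) (a b : A), δ (δ q a) b = δ (δ q b) a)
    (S T : Set Q) (hS : IsSCC δ S) (hT : IsSCC δ T)
    (x : A) (hx : (fun q => δ q x) '' S = S)
    (u : List A) (hu : (fun q => run δ q u) '' S ⊆ T) :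
    (fun q => δ q x) '' T = T := by
  set f : Q → Q := fun q => δ q x with hf
  obtain ⟨s, hs⟩ := hS.1
  -- f maps S onto S, hence bijectively (finiteness)
  have hmaps : Set.MapsTo f S S := by
    intro q hq; rw [← hx]; exact ⟨q, hq, rfl⟩
  have hsurj : Set.SurjOn f S S := by rw [Set.SurjOn, hx]
  have hinj : Set.InjOn f S :=
    ((Set.Finite.surjOn_iff_bijOn_of_mapsTo (Set.toFinite S) hmaps).1 hsurj).injOn
  -- find a period n ≥ 1 for s
  have hper : ∃ n : ℕ, 1 ≤ n ∧ f^[n] s = s := by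
    obtain ⟨i, j, hij, heq⟩ := Finite.exists_ne_map_eq_of_infinite (fun k : ℕ => f^[k] s)
    have key : ∀ i j : ℕ, i ≤ j → f^[i] s = f^[j] s → f^[j - i] s = s := by
      intro i
      induction i with
      | zero => intro j _ h; simpa using h.symm
      | succ i ih =>
        intro j hij h
        obtain ⟨j', rfl⟩ : ∃ j', j = j' + 1 := ⟨j - 1, by omega⟩
        rw [Function.iterate_succ_apply', Function.iterate_succ_apply'] at h
        have h' : f^[i] s = f^[j'] s :=
          hinj ((hmaps.iterate i) hs) ((hmaps.iterate j') hs) h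
        have := ih j' (by omega) h'
        simpa [Nat.succ_sub_succ] using this
    rcases Nat.lt_or_ge i j with h | h
    · exact ⟨j - i, by omega, key i j (le_of_lt h) heq⟩
    · have h' : j < i := lt_of_le_of_ne h (fun e => hij e.symm)
      exact ⟨i - j, by omega, key j i (le_of_lt h') heq.symm⟩
  obtain ⟨n, hn1, hfix⟩ := hper
  have hfixr : run δ s (List.replicate n x) = s := by rw [← iter_run]; exact hfix
  set t0 : Q := run δ s u with ht0def
  have ht0 : t0 ∈ T := hu ⟨s, hs, rfl⟩
  -- every t ∈ T is fixed by f^[n]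
  have hA : ∀ t ∈ T, f^[n] t = t := by
    intro t ht
    obtain ⟨w, hw⟩ := hT.2.1 t0 ht0 t ht
    rw [iter_run, ← hw, ht0def, run_comm δ hcomm, run_comm δ hcomm _ s u, hfixr]
  -- one letter x stays in T
  have hstep : ∀ t ∈ T, δ t x ∈ T := by
    intro t ht
    apply hT.2.2
    intro s' hs'
    constructor
    · obtain ⟨w, hw⟩ := hT.2.1 s' hs' t ht
      exact ⟨w ++ [x], by rw [run_append, hw]; rfl⟩
    · obtain ⟨m, rfl⟩ : ∃ m, n = m + 1 := ⟨n - 1, by omega⟩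
      obtain ⟨w, hw⟩ := hT.2.1 t ht s' hs'
      refine ⟨List.replicate m x ++ w, ?_⟩
      rw [run_append, ← iter_run]
      have : f^[m] (δ t x) = t := by
        rw [← Function.iterate_succ_apply]; exact hA t ht
      rw [this, hw]
  ext q
  constructor
  · rintro ⟨t, ht, rfl⟩; exact hstep t ht
  · intro hq
    obtain ⟨m, rfl⟩ : ∃ m, n = m + 1 := ⟨n - 1, by omega⟩
    have hmem : ∀ k, f^[k] q ∈ T := by
      intro k
      induction k with
      | zero => exact hq
      | succ k ih => rw [Function.iterate_succ_apply']; exact hstep _ ih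
    refine ⟨f^[m] q, hmem m, ?_⟩
    have := hA q hq
    rw [Function.iterate_succ_apply'] at this
    exact this
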